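/- Let k be a field, A a finite-dimensional associative k-algebra, and (V,ℓ,r) a finite-dimensional A-bimodule. Let Â = A⋉V* be the semidirect-product algebra on A⊕V* with product (x₁,u₁*)·(x₂,u₂*) = (x₁·x₂, r*(x₁)u₂* + u₁* ℓ*(x₂)), where (r*(x)u*)(v) = u*(v r(x)) and (u* ℓ*(x))(v) = u*(ℓ(x)v). Identify Â* with A*⊕V via the pairing ⟨(a*,v),(x,u*)⟩ = a*(x) + u*(v). Given a linear map β : V → A, define β̃₊ : Â* → Â by β̃₊(a*,v) = (β(v), βᵗ(a*)), where βᵗ : A* → V* is the transpose, (βᵗ(a*))(v) = a*(β(v)). Then β̃₊ is a balanced Â-bimodule homomorphism from (Â*,R_Â*,L_Â*) to Â (i.e. R_Â*(β̃₊(ξ))η = ξ L_Â*(β̃₊(η)) for all ξ, η ∈ Â*, and β̃₊(R_Â*(z)ξ) = z·β̃₊(ξ), β̃₊(ξ L_Â*(z)) = β̃₊(ξ)·z for all z ∈ Â, ξ ∈ Â*, where (R_Â*(z)ξ)(w) = ξ(w·z) and (ξ L_Â*(z))(w) = ξ(z·w)) if and only if β is a balanced A-bimodule homomorphism from (V,ℓ,r)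 to A, i.e. ℓ(β(u))v = u r(β(v)), β(ℓ(x)u) = x·β(u), and β(u r(x)) = β(u)·x for all x ∈ A, u, v ∈ V. -/

import Mathlib

/-!
Everything is checked componentwise on `Â* = A* ⊕ V` and `Â = A ⊕ V*`. Evaluating the three
conditions on `β̃₊` at elements of the form `(x, 0)` and `(0, u)` isolates the three conditions
on `β`. Conversely, the `A`- and `V`-components of both sides of each condition on `β̃₊` agree
after one application of each condition on `β`: the dual components are sums of two pairings,
which match term by term.
-/

section

variable {k A V : Type} [Field k]
  [NonUnitalRing A] [Module k A] [SMulCommClass k A A] [IsScalarTower k A A]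
  [AddCommGroup V] [Module k V]

/-- The multiplication of the semidirect product `Â = A ⋉ V*`:
`(x₁,u₁*)·(x₂,u₂*) = (x₁x₂, r*(x₁)u₂* + u₁*ℓ*(x₂))`, where `(r*(x)u*)(v) = u*(v r(x))`
and `(u*ℓ*(x))(v) = u*(ℓ(x)v)`. Here `ℓ x v` denotes `ℓ(x)v` and `r x v` denotes `v r(x)`. -/
def hatMul (ℓ r : A →ₗ[k] V →ₗ[k] V) (p q : A × Module.Dual k V) : A × Module.Dual k V :=
  (p.1 * q.1, q.2 ∘ₗ r p.1 + p.2 ∘ₗ ℓ q.1)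

/-- The action `R_Â*(z)ξ` of `z ∈ Â` on `ξ ∈ Â* = A* ⊕ V`, characterized by
`(R_Â*(z)ξ)(w) = ξ(w·z)` under the pairing `⟨(a*,v),(x,u*)⟩ = a*(x) + u*(v)`. -/
def Rhat (ℓ r : A →ₗ[k] V →ₗ[k] V) (z : A × Module.Dual k V) (ξ : Module.Dual k A × V) :
    Module.Dual k A × V :=
  (ξ.1 ∘ₗ LinearMap.mulRight k z.1 + z.2 ∘ₗ r.flip ξ.2, ℓ z.1 ξ.2)

/-- The action `ξ L_Â*(z)` of `z ∈ Â` on `ξ ∈ Â* = A* ⊕ V`, characterized by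
`(ξ L_Â*(z))(w) = ξ(z·w)` under the pairing `⟨(a*,v),(x,u*)⟩ = a*(x) + u*(v)`. -/
def Lhat (ℓ r : A →ₗ[k] V →ₗ[k] V) (ξ : Module.Dual k A × V) (z : A × Module.Dual k V) :
    Module.Dual k A × V :=
  (ξ.1 ∘ₗ LinearMap.mulLeft k z.1 + z.2 ∘ₗ ℓ.flip ξ.2, r z.1 ξ.2)

/-- `β̃₊ : Â* → Â`, `β̃₊(a*, v) = (β(v), βᵗ(a*))`. -/
def bplus (β : V →ₗ[k] A) (ξ : Module.Dual k A × V) : A × Module.Dual k V :=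
  (β ξ.2, ξ.1 ∘ₗ β)

end

section

variable {k A V : Type} [Field k] [NonUnitalRing A] [Module k A] [AddCommGroup V] [Module k V]
  (ℓ r : A →ₗ[k] V →ₗ[k] V) (β : V →ₗ[k] A)

theorem balanced_of_Rhat_bplus_eq_Lhat_bplus [SMulCommClass k A A] [IsScalarTower k A A]
    (h : ∀ ξ η : Module.Dual k A × V, Rhat ℓ r (bplus β ξ) η = Lhat ℓ r ξ (bplus β η))
    (u v : V) : ℓ (β u) v = r (β v) u :=
  congrArg Prod.snd (h (0, u) (0, v))

theorem map_left_of_bplus_Rhat_eq_hatMul [IsScalarTower k A A]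
    (h : ∀ (z : A × Module.Dual k V) (ξ : Module.Dual k A × V),
      bplus β (Rhat ℓ r z ξ) = hatMul ℓ r z (bplus β ξ))
    (x : A) (u : V) : β (ℓ x u) = x * β u :=
  congrArg Prod.fst (h (x, 0) (0, u))

theorem map_right_of_bplus_Lhat_eq_hatMul [SMulCommClass k A A]
    (h : ∀ (z : A × Module.Dual k V) (ξ : Module.Dual k A × V),
      bplus β (Lhat ℓ r ξ z) = hatMul ℓ r (bplus β ξ) z)
    (x : A) (u : V) : β (r x u) = β u * x :=
  congrArg Prod.fst (h (x, 0) (0, u))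

theorem Rhat_bplus_eq_Lhat_bplus [SMulCommClass k A A] [IsScalarTower k A A]
    (hbal : ∀ u v : V, ℓ (β u) v = r (β v) u)
    (hleft : ∀ (x : A) (u : V), β (ℓ x u) = x * β u)
    (hright : ∀ (x : A) (u : V), β (r x u) = β u * x) (ξ η : Module.Dual k A × V) :
    Rhat ℓ r (bplus β ξ) η = Lhat ℓ r ξ (bplus β η) := by
  refine Prod.ext (LinearMap.ext fun a => ?_) (hbal ξ.2 η.2)
  simp only [Rhat, Lhat, bplus, LinearMap.add_apply, LinearMap.comp_apply,
    LinearMap.mulRight_apply, LinearMap.mulLeft_apply, LinearMap.flip_apply, hleft, hright]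
  exact add_comm _ _

theorem bplus_Rhat_eq_hatMul [IsScalarTower k A A]
    (hbal : ∀ u v : V, ℓ (β u) v = r (β v) u)
    (hleft : ∀ (x : A) (u : V), β (ℓ x u) = x * β u)
    (hright : ∀ (x : A) (u : V), β (r x u) = β u * x)
    (z : A × Module.Dual k V) (ξ : Module.Dual k A × V) :
    bplus β (Rhat ℓ r z ξ) = hatMul ℓ r z (bplus β ξ) := by
  refine Prod.ext (hleft z.1 ξ.2) (LinearMap.ext fun v => ?_)
  simp only [Rhat, hatMul, bplus, LinearMap.add_apply, LinearMap.comp_apply,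
    LinearMap.mulRight_apply, LinearMap.flip_apply, hright, hbal ξ.2 v]

theorem bplus_Lhat_eq_hatMul [SMulCommClass k A A]
    (hbal : ∀ u v : V, ℓ (β u) v = r (β v) u)
    (hleft : ∀ (x : A) (u : V), β (ℓ x u) = x * β u)
    (hright : ∀ (x : A) (u : V), β (r x u) = β u * x)
    (z : A × Module.Dual k V) (ξ : Module.Dual k A × V) :
    bplus β (Lhat ℓ r ξ z) = hatMul ℓ r (bplus β ξ) z := by
  refine Prod.ext (hright z.1 ξ.2) (LinearMap.ext fun v => ?_)
  simp only [Lhat, hatMul, bplus, LinearMap.add_apply, LinearMap.comp_apply,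
    LinearMap.mulLeft_apply, LinearMap.flip_apply, hleft, hbal]
  exact add_comm _ _

end

section

variable {k A V : Type} [Field k]
  [NonUnitalRing A] [Module k A] [SMulCommClass k A A] [IsScalarTower k A A]
  [AddCommGroup V] [Module k V]

theorem stmt16
    (ℓ r : A →ₗ[k] V →ₗ[k] V)
    (β : V →ₗ[k] A) :
    ((∀ ξ η : Module.Dual k A × V,
        Rhat ℓ r (bplus β ξ) η = Lhat ℓ r ξ (bplus β η)) ∧
     (∀ (z : A × Module.Dual k V) (ξ : Module.Dual k A × V),
        bplus β (Rhat ℓ r z ξ) = hatMul ℓ r z (bplus β ξ)) ∧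
     (∀ (z : A × Module.Dual k V) (ξ : Module.Dual k A × V),
        bplus β (Lhat ℓ r ξ z) = hatMul ℓ r (bplus β ξ) z)) ↔
    ((∀ u v : V, ℓ (β u) v = r (β v) u) ∧
     (∀ (x : A) (u : V), β (ℓ x u) = x * β u) ∧
     (∀ (x : A) (u : V), β (r x u) = β u * x)) :=
  ⟨fun ⟨hbal, hleft, hright⟩ =>
    ⟨balanced_of_Rhat_bplus_eq_Lhat_bplus ℓ r β hbal,
      map_left_of_bplus_Rhat_eq_hatMul ℓ r β hleft,
      map_right_of_bplus_Lhat_eq_hatMul ℓ r β hright⟩,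
   fun ⟨hbal, hleft, hright⟩ =>
    ⟨Rhat_bplus_eq_Lhat_bplus ℓ r β hbal hleft hright,
      bplus_Rhat_eq_hatMul ℓ r β hbal hleft hright,
      bplus_Lhat_eq_hatMul ℓ r β hbal hleft hright⟩⟩

end
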